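/- A Borel subset B of the Baire space ω^ω belongs to the tree ideal l₀ if and only if B does not contain the body [T] of any Laver tree T. -/

import Mathlib

open Cardinal Set MeasureTheory

/-- A tree on ω: a nonempty set of finite sequences closed under initial segments. -/
def IsTree (T : Set (List ℕ)) : Prop :=
  T.Nonempty ∧ ∀ s ∈ T, ∀ n : ℕ, s.take n ∈ T

/-- The body of a tree: all infinite branches. -/
def treeBody (T : Set (List ℕ)) : Set (ℕ → ℕ) :=
  {x | ∀ n : ℕ, (List.ofFn fun i : Fin n => x i) ∈ T}

/-- Immediate successors of a node in a tree. -/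
def succs (T : Set (List ℕ)) (t : List ℕ) : Set ℕ := {n | t ++ [n] ∈ T}

/-- Sacks (perfect) tree: every node has an extension with at least two immediate successors. -/
def IsSacksTree (T : Set (List ℕ)) : Prop :=
  IsTree T ∧ ∀ s ∈ T, ∃ t ∈ T, s <+: t ∧ (succs T t).Nontrivial

/-- Miller tree: every node has an extension with infinitely many immediate successors. -/
def IsMillerTree (T : Set (List ℕ)) : Prop :=
  IsTree T ∧ ∀ s ∈ T, ∃ t ∈ T, s <+: t ∧ (succs T t).Infinite

/-- Laver tree: has a stem (a node comparable with every node) such that every node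
extending the stem has infinitely many immediate successors. -/
def IsLaverTree (T : Set (List ℕ)) : Prop :=
  IsTree T ∧ ∃ s ∈ T, (∀ t ∈ T, s <+: t ∨ t <+: s) ∧
    ∀ t ∈ T, s <+: t → (succs T t).Infinite

/-- Complete Laver tree: every node has infinitely many immediate successors. -/
def IsCompleteLaverTree (T : Set (List ℕ)) : Prop :=
  IsTree T ∧ ∀ t ∈ T, (succs T t).Infinite

/-- The tree ideal t₀ associated with a family of trees 𝕋. -/
def treeIdeal (𝕋 : Set (Set (List ℕ))) : Set (Set (ℕ → ℕ)) :=
  {A | ∀ P ∈ 𝕋, ∃ Q ∈ 𝕋, Q ⊆ P ∧ treeBody Q ∩ A = ∅}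

/-- t-measurability with respect to a family of trees 𝕋. -/
def TMeasurable (𝕋 : Set (Set (List ℕ))) (A : Set (ℕ → ℕ)) : Prop :=
  ∀ P ∈ 𝕋, ∃ Q ∈ 𝕋, Q ⊆ P ∧ (treeBody Q ⊆ A ∨ treeBody Q ∩ A = ∅)

/-- 𝕋-Bernstein set: meets and omits the body of every tree in 𝕋. -/
def TBernstein (𝕋 : Set (Set (List ℕ))) (B : Set (ℕ → ℕ)) : Prop :=
  ∀ T ∈ 𝕋, (B ∩ treeBody T).Nonempty ∧ (B \ treeBody T).Nonempty

/-!
Call `B` Laver-measurable if below every Laver tree there is a Laver tree whose body lies inside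
`B` or misses `B`. For such `B`, membership in `l₀` fails exactly when some Laver body lies inside
`B`, because Laver bodies are nonempty. Borel sets are Laver-measurable: a cylinder is decided by
passing to the subtree above a node longer than it, complements are immediate, and countable unions
are handled by fusion. Fusion rests on the stem lemma: if Laver trees whose bodies miss `A` are
dense below a Laver tree `P` with stem `s`, then one of them is a subtree of `P` with stem `s`.
-/

theorem prefix_of_comparable_of_length_le {α : Type*} {u v : List α} (h : u <+: v ∨ v <+: u)
    (hl : u.length ≤ v.length) : u <+: v :=
  h.elim id fun hvu => (hvu.eq_of_length (le_antisymm hvu.length_le hl)) ▸ List.prefix_rfl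

theorem IsTree.mem_of_prefix {T : Set (List ℕ)} (hT : IsTree T) {u v : List ℕ} (hu : u ∈ T)
    (hvu : v <+: u) : v ∈ T :=
  List.prefix_iff_eq_take.1 hvu ▸ hT.2 u hu _

theorem treeBody_mono {S T : Set (List ℕ)} (h : S ⊆ T) : treeBody S ⊆ treeBody T :=
  fun _ hx n => h (hx n)

def initSeg (x : ℕ → ℕ) (n : ℕ) : List ℕ := List.ofFn fun i : Fin n => x i

@[simp]
theorem length_initSeg (x : ℕ → ℕ) (n : ℕ) : (initSeg x n).length = n := List.length_ofFn

theorem take_initSeg (x : ℕ → ℕ) {m n : ℕ} (h : m ≤ n) : (initSeg x n).take m = initSeg x m :=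
  List.ext_getElem (by simp [h]) fun i _ _ => by simp [initSeg]

theorem initSeg_prefix_initSeg (x : ℕ → ℕ) {m n : ℕ} (h : m ≤ n) : initSeg x m <+: initSeg x n :=
  take_initSeg x h ▸ List.take_prefix _ _

theorem initSeg_eq_initSeg_iff {x y : ℕ → ℕ} {n : ℕ} :
    initSeg x n = initSeg y n ↔ y ∈ PiNat.cylinder x n := by
  simp [initSeg, List.ofFn_inj, funext_iff, Fin.forall_iff, eq_comm]

structure IsLaverStem (T : Set (List ℕ)) (s : List ℕ) : Prop where
  isTree : IsTree T
  mem : s ∈ T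
  comparable : ∀ t ∈ T, s <+: t ∨ t <+: s
  infinite_succs : ∀ t ∈ T, s <+: t → (succs T t).Infinite

theorem IsLaverStem.isLaverTree {T : Set (List ℕ)} {s : List ℕ} (h : IsLaverStem T s) :
    IsLaverTree T :=
  ⟨h.isTree, s, h.mem, h.comparable, h.infinite_succs⟩

theorem IsLaverTree.exists_isLaverStem {T : Set (List ℕ)} (h : IsLaverTree T) :
    ∃ s, IsLaverStem T s :=
  let ⟨hT, s, hs, hcomp, hinf⟩ := h
  ⟨s, hT, hs, hcomp, hinf⟩

def subtreeAt (T : Set (List ℕ)) (t : List ℕ) : Set (List ℕ) := {u ∈ T | u <+: t ∨ t <+: u}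

theorem subtreeAt_subset (T : Set (List ℕ)) (t : List ℕ) : subtreeAt T t ⊆ T := fun _ hu => hu.1

namespace IsLaverStem

variable {T R : Set (List ℕ)} {s t : List ℕ}

theorem initSeg_eq (h : IsLaverStem T s) {x : ℕ → ℕ} (hx : x ∈ treeBody T) :
    initSeg x s.length = s :=
  (prefix_of_comparable_of_length_le (h.comparable _ (hx s.length)).symm (by simp)).eq_of_length
    (by simp)

theorem treeBody_subset_cylinder (h : IsLaverStem T s) {x : ℕ → ℕ} (hx : x ∈ treeBody T) :
    treeBody T ⊆ PiNat.cylinder x s.length :=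
  fun _ hy => initSeg_eq_initSeg_iff.1 ((h.initSeg_eq hx).trans (h.initSeg_eq hy).symm)

theorem treeBody_nonempty (h : IsLaverStem T s) : (treeBody T).Nonempty := by
  choose! next hnext using fun u (hu : u ∈ T) (hsu : s <+: u) =>
    (h.infinite_succs u hu hsu).nonempty
  let c : ℕ → List ℕ := fun k => Nat.rec s (fun _ u => u ++ [next u]) k
  have hc : ∀ k, c k ∈ T ∧ s <+: c k ∧ (c k).length = s.length + k := by
    intro k
    induction k with
    | zero => exact ⟨h.mem, List.prefix_rfl, rfl⟩
    | succ k ih =>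
      refine ⟨hnext _ ih.1 ih.2.1, ih.2.1.trans (List.prefix_append _ _), ?_⟩
      simp [c, ih.2.2, Nat.add_assoc]
  have hmono : ∀ ⦃k l⦄, k ≤ l → c k <+: c l :=
    Nat.rel_of_forall_rel_succ_of_le (· <+: ·) fun k => List.prefix_append _ _
  refine ⟨fun i => (c (i + 1)).getD i 0, fun n => ?_⟩
  have hlen : ∀ {i k}, i < k → i < (c k).length := fun hik => by rw [(hc _).2.2]; omega
  suffices initSeg (fun i => (c (i + 1)).getD i 0) n = (c n).take n by
    change initSeg (fun i => (c (i + 1)).getD i 0) n ∈ T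
    exact this ▸ h.isTree.2 _ (hc n).1 n
  refine List.ext_getElem (by simp [(hc n).2.2]) fun i hi _ => ?_
  simp only [length_initSeg] at hi
  simp [initSeg, List.getElem?_eq_getElem (hlen (Nat.lt_succ_self i)),
    (hmono (Nat.succ_le_of_lt hi)).getElem (hlen (Nat.lt_succ_self i))]

theorem subtreeAt (h : IsLaverStem T s) (ht : t ∈ T) (hst : s <+: t) :
    IsLaverStem (subtreeAt T t) t where
  isTree := by
    refine ⟨⟨t, ht, Or.inl List.prefix_rfl⟩, fun u ⟨hu, hut⟩ n => ⟨h.isTree.2 u hu n, ?_⟩⟩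
    rcases hut with hut | htu
    · exact Or.inl ((List.take_prefix n u).trans hut)
    · exact List.prefix_or_prefix_of_prefix (List.take_prefix n u) htu
  mem := ⟨ht, Or.inl List.prefix_rfl⟩
  comparable _ hu := hu.2.symm
  infinite_succs u hu htu := (h.infinite_succs u hu.1 (hst.trans htu)).mono
    fun _ hn => ⟨hn, Or.inr (htu.trans (List.prefix_append _ _))⟩

/-- Below its stem a Laver tree does not branch. -/
theorem prefix_of_subset (hT : IsLaverStem T s) (hR : IsLaverStem R t) (hRT : R ⊆ T) :
    s <+: t := by
  refine prefix_of_comparable_of_length_le (hT.comparable t (hRT hR.mem)) ?_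
  by_contra! hlt
  obtain ⟨m, hm, n, hn, hmn⟩ := (hR.infinite_succs t hR.mem List.prefix_rfl).nontrivial
  have hsucc : ∀ k ∈ succs R t, t ++ [k] = s.take (t.length + 1) := fun k hk =>
    List.prefix_iff_eq_take.1 (prefix_of_comparable_of_length_le
      (hT.comparable _ (hRT hk)).symm (by simp; omega)) |>.trans (by simp)
  exact hmn (by simpa using (hsucc m hm).trans (hsucc n hn).symm)

end IsLaverStem

def glue (F : Set (List ℕ)) (L : ℕ) (R : List ℕ → Set (List ℕ)) : Set (List ℕ) :=
  {u ∈ F | u.length ≤ L} ∪ ⋃ v ∈ {v ∈ F | v.length = L}, R v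

section Glue

variable {F : Set (List ℕ)} {L : ℕ} {R : List ℕ → Set (List ℕ)}

theorem mem_glue_of_le_length (hR : ∀ v ∈ F, v.length = L → IsLaverStem (R v) v)
    {u : List ℕ} (hu : u ∈ glue F L R) (hL : L ≤ u.length) : u.take L ∈ F ∧ u ∈ R (u.take L) := by
  rcases hu with ⟨huF, hul⟩ | hu
  · rw [List.take_of_length_le hul]
    exact ⟨huF, (hR u huF (by omega)).mem⟩
  · obtain ⟨v, ⟨hvF, hvL⟩, huv⟩ := mem_iUnion₂.1 hu
    have hvu : v <+: u :=
      prefix_of_comparable_of_length_le ((hR v hvF hvL).comparable u huv) (by omega)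
    rw [← hvL, ← List.prefix_iff_eq_take.1 hvu]
    exact ⟨hvF, huv⟩

theorem mem_of_mem_glue_of_length_le (hF : IsTree F)
    (hR : ∀ v ∈ F, v.length = L → IsLaverStem (R v) v)
    {u : List ℕ} (hu : u ∈ glue F L R) (hL : u.length ≤ L) : u ∈ F := by
  rcases hu with ⟨huF, -⟩ | hu
  · exact huF
  · obtain ⟨v, ⟨hvF, hvL⟩, huv⟩ := mem_iUnion₂.1 hu
    exact hF.mem_of_prefix hvF <| prefix_of_comparable_of_length_le
      ((hR v hvF hvL).comparable u huv).symm (by omega)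

theorem isLaverStem_glue {s : List ℕ} (hF : IsTree F) (hs : s ∈ F)
    (hcomp : ∀ u ∈ F, s <+: u ∨ u <+: s) (hsL : s.length ≤ L)
    (hsucc : ∀ u ∈ F, s <+: u → u.length < L → (succs F u).Infinite)
    (hR : ∀ v ∈ F, v.length = L → IsLaverStem (R v) v) : IsLaverStem (glue F L R) s where
  isTree := by
    refine ⟨⟨s, Or.inl ⟨hs, hsL⟩⟩, fun u hu n => ?_⟩
    rcases hu with ⟨huF, hul⟩ | hu
    · exact Or.inl ⟨hF.2 u huF n, (List.length_take_le' n u).trans hul⟩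
    · obtain ⟨v, hv, huv⟩ := mem_iUnion₂.1 hu
      exact Or.inr (mem_iUnion₂.2 ⟨v, hv, (hR v hv.1 hv.2).isTree.2 u huv n⟩)
  mem := Or.inl ⟨hs, hsL⟩
  comparable u hu := by
    rcases le_total u.length L with hul | hLu
    · exact hcomp u (mem_of_mem_glue_of_length_le hF hR hu hul)
    · have hsv : s <+: u.take L := prefix_of_comparable_of_length_le
        (hcomp _ (mem_glue_of_le_length hR hu hLu).1) (by simp; omega)
      exact Or.inl (hsv.trans (List.take_prefix L u))
  infinite_succs u hu hsu := by
    by_cases hul : u.length < L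
    · refine (hsucc u (mem_of_mem_glue_of_length_le hF hR hu hul.le) hsu hul).mono
        fun n hn => Or.inl ⟨hn, by simp; omega⟩
    · obtain ⟨hvF, huv⟩ := mem_glue_of_le_length hR hu (not_lt.1 hul)
      have hvL : (u.take L).length = L := by simp; omega
      exact ((hR _ hvF hvL).infinite_succs u huv (List.take_prefix L u)).mono
        fun n hn => Or.inr (mem_iUnion₂.2 ⟨_, ⟨hvF, hvL⟩, hn⟩)

theorem treeBody_glue (hR : ∀ v ∈ F, v.length = L → IsLaverStem (R v) v) {x : ℕ → ℕ}
    (hx : x ∈ treeBody (glue F L R)) : initSeg x L ∈ F ∧ x ∈ treeBody (R (initSeg x L)) := by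
  have hmem : ∀ m, L ≤ m → initSeg x L ∈ F ∧ initSeg x m ∈ R (initSeg x L) := fun m hm => by
    have hxm : initSeg x m ∈ glue F L R := hx m
    simpa only [take_initSeg x hm] using mem_glue_of_le_length hR hxm (by simpa using hm)
  refine ⟨(hmem L le_rfl).1, fun m => ?_⟩
  rcases le_total L m with hm | hm
  · exact (hmem m hm).2
  · exact (hR _ (hmem L le_rfl).1 (by simp)).isTree.mem_of_prefix (hmem L le_rfl).2
      (initSeg_prefix_initSeg x hm)

end Glue

def HasAvoidingSubtree (P : Set (List ℕ)) (A : Set (ℕ → ℕ)) (t : List ℕ) : Prop :=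
  ∃ R ⊆ P, IsLaverStem R t ∧ treeBody R ∩ A = ∅

theorem HasAvoidingSubtree.of_infinite {P : Set (List ℕ)} {A : Set (ℕ → ℕ)} {t : List ℕ}
    (h : {n | HasAvoidingSubtree P A (t ++ [n])}.Infinite) : HasAvoidingSubtree P A t := by
  choose! R hRP hR hRA using fun (v : List ℕ) (hv : HasAvoidingSubtree P A v) => hv
  set F := {u | ∃ n, HasAvoidingSubtree P A (t ++ [n]) ∧ u <+: t ++ [n]}
  have hFL : ∀ v ∈ F, v.length = t.length + 1 → HasAvoidingSubtree P A v := by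
    rintro v ⟨n, hn, hv⟩ hl
    rwa [hv.eq_of_length (by simp [hl])]
  obtain ⟨n₀, hn₀⟩ := h.nonempty
  have htF : t ∈ F := ⟨n₀, hn₀, List.prefix_append _ _⟩
  have hF : IsTree F :=
    ⟨⟨t, htF⟩, fun u ⟨n, hn, hu⟩ k => ⟨n, hn, (List.take_prefix k u).trans hu⟩⟩
  have hcomp : ∀ u ∈ F, t <+: u ∨ u <+: t := by
    rintro u ⟨n, -, hu⟩
    exact (List.prefix_concat_iff.1 hu).imp
      (fun h : u = t ++ [n] => h ▸ List.prefix_append t [n]) id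
  have hsucc : ∀ u ∈ F, t <+: u → u.length < t.length + 1 → (succs F u).Infinite := by
    intro u _ htu hl
    obtain rfl : t = u := htu.eq_of_length (by have := htu.length_le; omega)
    exact h.mono fun n hn => ⟨n, hn, List.prefix_rfl⟩
  have hRF : ∀ v ∈ F, v.length = t.length + 1 → IsLaverStem (R v) v :=
    fun v hv hl => hR v (hFL v hv hl)
  refine ⟨glue F (t.length + 1) R, ?_, isLaverStem_glue hF htF hcomp (by omega) hsucc hRF, ?_⟩
  · rintro u (⟨⟨n, hn, hu⟩, -⟩ | hu)
    · exact hRP _ hn ((hR _ hn).isTree.mem_of_prefix (hR _ hn).mem hu)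
    · obtain ⟨v, ⟨hvF, hvL⟩, huv⟩ := mem_iUnion₂.1 hu
      exact hRP v (hFL v hvF hvL) huv
  · refine eq_empty_of_subset_empty fun x ⟨hx, hxA⟩ => ?_
    obtain ⟨hvF, hxR⟩ := treeBody_glue hRF hx
    exact (hRA _ (hFL _ hvF (by simp))).subset ⟨hxR, hxA⟩

theorem IsLaverStem.prune {P : Set (List ℕ)} {s : List ℕ} (hP : IsLaverStem P s)
    {W : Set (List ℕ)} (hs : s ∉ W)
    (hW : ∀ u ∈ P, s <+: u → u ∉ W → {n | u ++ [n] ∈ W}.Finite) :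
    IsLaverStem {u ∈ P | ∀ v, s <+: v → v <+: u → v ∉ W} s := by
  have hsT : s ∈ {u ∈ P | ∀ v, s <+: v → v <+: u → v ∉ W} :=
    mem_sep hP.mem fun v hsv hvs => hvs.eq_of_length (le_antisymm hvs.length_le hsv.length_le) ▸ hs
  refine ⟨⟨⟨s, hsT⟩, fun u hu n => ⟨hP.isTree.2 u hu.1 n, fun v hsv hvu =>
    hu.2 v hsv (hvu.trans (List.take_prefix n u))⟩⟩, hsT, fun u hu => hP.comparable u hu.1,
    fun u hu hsu => ?_⟩
  refine ((hP.infinite_succs u hu.1 hsu).sdiff (hW u hu.1 hsu (hu.2 u hsu List.prefix_rfl))).mono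
    fun n hn => mem_sep hn.1 fun v hsv hv => ?_
  exact (List.prefix_concat_iff.1 hv).elim (fun h => h ▸ hn.2) (hu.2 v hsv)

/-- Call a node good if it is the stem of a Laver subtree of `P` whose body misses `A`. By gluing, a
node with infinitely many good successors is good, so if `s` were bad, the nodes above `s` with no
good node in between would form a Laver tree with stem `s`; a subtree of it missing `A` would then
have a good stem. -/
theorem IsLaverStem.hasAvoidingSubtree_of_dense {P : Set (List ℕ)} {s : List ℕ} {A : Set (ℕ → ℕ)}
    (hP : IsLaverStem P s)
    (hdense : ∀ Q ∈ {T | IsLaverTree T}, Q ⊆ P →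
      ∃ R ∈ {T | IsLaverTree T}, R ⊆ Q ∧ treeBody R ∩ A = ∅) :
    HasAvoidingSubtree P A s := by
  by_contra hs
  have hT := hP.prune (W := {t | HasAvoidingSubtree P A t}) hs
    fun u _ _ hu => not_infinite.1 fun hinf => hu (.of_infinite hinf)
  obtain ⟨R, hR, hRT, hRA⟩ := hdense _ hT.isLaverTree fun u hu => hu.1
  obtain ⟨t, ht⟩ := IsLaverTree.exists_isLaverStem hR
  exact (hRT ht.mem).2 t (hT.prefix_of_subset ht hRT) List.prefix_rfl
    ⟨R, hRT.trans fun u hu => hu.1, ht, hRA⟩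

theorem IsLaverStem.exists_fusion_step {Q : Set (List ℕ)} {s : List ℕ} {A : Set (ℕ → ℕ)}
    (hQ : IsLaverStem Q s) {L : ℕ} (hL : s.length ≤ L)
    (h : ∀ u ∈ Q, u.length = L → HasAvoidingSubtree Q A u) :
    ∃ Q' ⊆ Q, IsLaverStem Q' s ∧ {u ∈ Q | u.length ≤ L} ⊆ Q' ∧ treeBody Q' ∩ A = ∅ := by
  choose! R hRQ hR hRA using h
  refine ⟨glue Q L R, ?_, isLaverStem_glue hQ.isTree hQ.mem hQ.comparable hL
    (fun u hu hsu _ => hQ.infinite_succs u hu hsu) hR, subset_union_left, ?_⟩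
  · rintro u (hu | hu)
    · exact hu.1
    · obtain ⟨v, ⟨hvQ, hvL⟩, huv⟩ := mem_iUnion₂.1 hu
      exact hRQ v hvQ hvL huv
  · refine eq_empty_of_subset_empty fun x ⟨hx, hxA⟩ => ?_
    obtain ⟨hvQ, hxR⟩ := treeBody_glue hR hx
    exact (hRA _ hvQ (by simp)).subset ⟨hxR, hxA⟩

theorem isLaverStem_iInter_of_fusion {Q : ℕ → Set (List ℕ)} {s : List ℕ}
    (hQ : ∀ n, IsLaverStem (Q n) s) (hanti : ∀ n, Q (n + 1) ⊆ Q n)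
    (hkeep : ∀ n, ∀ u ∈ Q n, u.length ≤ s.length + n → u ∈ Q (n + 1)) :
    IsLaverStem (⋂ n, Q n) s := by
  have hmem : ∀ n, ∀ u ∈ Q n, u.length ≤ s.length + n → u ∈ ⋂ m, Q m := by
    refine fun n u hu hul => mem_iInter.2 fun m => ?_
    rcases le_total m n with hmn | hnm
    · exact antitone_nat_of_succ_le hanti hmn hu
    · induction m, hnm using Nat.le_induction with
      | base => exact hu
      | succ m hnm ih => exact hkeep m u ih (by omega)
  refine ⟨⟨⟨s, mem_iInter.2 fun n => (hQ n).mem⟩, fun u hu k => mem_iInter.2 fun n =>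
    (hQ n).isTree.2 u (mem_iInter.1 hu n) k⟩, mem_iInter.2 fun n => (hQ n).mem,
    fun u hu => (hQ 0).comparable u (mem_iInter.1 hu 0), fun u hu hsu => ?_⟩
  obtain ⟨n, hn⟩ := Nat.exists_eq_add_of_le hsu.length_le
  exact ((hQ (n + 1)).infinite_succs u (mem_iInter.1 hu _) hsu).mono fun k hk =>
    hmem (n + 1) _ hk (by simp; omega)

theorem IsLaverStem.exists_treeBody_inter_iUnion_eq_empty {P : Set (List ℕ)} {s : List ℕ}
    (hP : IsLaverStem P s) {A : ℕ → Set (ℕ → ℕ)}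
    (hdense : ∀ n, ∀ Q ∈ {T | IsLaverTree T}, Q ⊆ P →
      ∃ R ∈ {T | IsLaverTree T}, R ⊆ Q ∧ treeBody R ∩ A n = ∅) :
    ∃ Q ∈ {T | IsLaverTree T}, Q ⊆ P ∧ treeBody Q ∩ ⋃ n, A n = ∅ := by
  have step : ∀ n Q, Q ⊆ P → IsLaverStem Q s → ∃ Q' ⊆ Q, IsLaverStem Q' s ∧
      {u ∈ Q | u.length ≤ s.length + n} ⊆ Q' ∧ treeBody Q' ∩ A n = ∅ := by
    refine fun n Q hQP hQ => hQ.exists_fusion_step (by omega) fun u hu hul => ?_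
    have hsu : s <+: u := prefix_of_comparable_of_length_le (hQ.comparable u hu) (by omega)
    obtain ⟨R, hR, hRu, hRA⟩ := (hQ.subtreeAt hu hsu).hasAvoidingSubtree_of_dense
      fun Q' hQ' hQ'Q => hdense n Q' hQ' (hQ'Q.trans ((subtreeAt_subset Q u).trans hQP))
    exact ⟨R, hR.trans (subtreeAt_subset Q u), hRu, hRA⟩
  choose! next hnextQ hnext hkeep hnextA using step
  let Q : ℕ → Set (List ℕ) := fun n => Nat.rec P (fun n Q => next n Q) n
  have hQ : ∀ n, Q n ⊆ P ∧ IsLaverStem (Q n) s := by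
    intro n
    induction n with
    | zero => exact ⟨subset_rfl, hP⟩
    | succ n ih => exact ⟨(hnextQ n _ ih.1 ih.2).trans ih.1, hnext n _ ih.1 ih.2⟩
  have hlim := isLaverStem_iInter_of_fusion (fun n => (hQ n).2)
    (fun n => hnextQ n _ (hQ n).1 (hQ n).2)
    (fun n u hu hul => hkeep n _ (hQ n).1 (hQ n).2 ⟨hu, hul⟩)
  refine ⟨⋂ n, Q n, hlim.isLaverTree, (iInter_subset Q 0).trans (hQ 0).1, ?_⟩
  refine (inter_iUnion _ _).trans (iUnion_eq_empty.2 fun n => eq_empty_of_subset_empty ?_)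
  rw [← hnextA n _ (hQ n).1 (hQ n).2]
  exact inter_subset_inter_left _ (treeBody_mono (iInter_subset Q (n + 1)))

theorem tMeasurable_empty (𝕋 : Set (Set (List ℕ))) : TMeasurable 𝕋 ∅ :=
  fun P hP => ⟨P, hP, subset_rfl, Or.inr (inter_empty _)⟩

theorem TMeasurable.compl {𝕋 : Set (Set (List ℕ))} {A : Set (ℕ → ℕ)} (h : TMeasurable 𝕋 A) :
    TMeasurable 𝕋 Aᶜ := fun P hP =>
  let ⟨Q, hQ, hQP, hQA⟩ := h P hP
  ⟨Q, hQ, hQP, hQA.symm.imp (subset_compl_iff_disjoint_right.2 ∘ disjoint_iff_inter_eq_empty.2)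
    sdiff_eq_empty.2⟩

theorem tMeasurable_laver_iUnion {A : ℕ → Set (ℕ → ℕ)}
    (h : ∀ n, TMeasurable {T | IsLaverTree T} (A n)) :
    TMeasurable {T | IsLaverTree T} (⋃ n, A n) := by
  intro P hP
  by_cases hsub : ∃ Q ∈ {T | IsLaverTree T}, Q ⊆ P ∧ treeBody Q ⊆ ⋃ n, A n
  · obtain ⟨Q, hQ, hQP, hQA⟩ := hsub
    exact ⟨Q, hQ, hQP, Or.inl hQA⟩
  obtain ⟨s, hs⟩ := IsLaverTree.exists_isLaverStem hP
  obtain ⟨Q, hQ, hQP, hQA⟩ := hs.exists_treeBody_inter_iUnion_eq_empty fun n Q hQ hQP =>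
    let ⟨R, hR, hRQ, hRA⟩ := h n Q hQ
    ⟨R, hR, hRQ, hRA.resolve_left fun hRA =>
      hsub ⟨R, hR, hRQ.trans hQP, hRA.trans (subset_iUnion A n)⟩⟩
  exact ⟨Q, hQ, hQP, Or.inr hQA⟩

theorem tMeasurable_laver_cylinder (x : ℕ → ℕ) (n : ℕ) :
    TMeasurable {T | IsLaverTree T} (PiNat.cylinder x n) := by
  intro P hP
  obtain ⟨s, hs⟩ := IsLaverTree.exists_isLaverStem hP
  obtain ⟨y, hy⟩ := hs.treeBody_nonempty
  set t := initSeg y (s.length + n)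
  have ht : IsLaverStem (subtreeAt P t) t :=
    hs.subtreeAt (hy _) (hs.initSeg_eq hy ▸ initSeg_prefix_initSeg y (by omega))
  have hyt : y ∈ treeBody (subtreeAt P t) := fun m =>
    ⟨hy m, (le_total m _).imp (initSeg_prefix_initSeg y) (initSeg_prefix_initSeg y)⟩
  have hcyl : treeBody (subtreeAt P t) ⊆ PiNat.cylinder y n :=
    (ht.treeBody_subset_cylinder hyt).trans (PiNat.cylinder_anti y (by simp [t]))
  refine ⟨subtreeAt P t, ht.isLaverTree, subtreeAt_subset P t, ?_⟩
  by_cases hyx : y ∈ PiNat.cylinder x n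
  · exact Or.inl fun z hz i hi => (hcyl hz i hi).trans (hyx i hi)
  · refine Or.inr (eq_empty_of_subset_empty fun z ⟨hz, hzx⟩ => hyx fun i hi => ?_)
    exact (hcyl hz i hi).symm.trans (hzx i hi)

theorem tMeasurable_laver_of_measurableSet {B : Set (ℕ → ℕ)}
    (hB : MeasurableSet[borel (ℕ → ℕ)] B) : TMeasurable {T | IsLaverTree T} B := by
  rw [borel_eq_generateFrom_of_subbasis
    (PiNat.isTopologicalBasis_cylinders fun _ => ℕ).eq_generateFrom] at hB
  induction B, hB using MeasurableSpace.generateFrom_induction with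
  | hC _ hC =>
    obtain ⟨x, n, rfl⟩ := hC
    exact tMeasurable_laver_cylinder x n
  | empty => exact tMeasurable_empty _
  | compl _ _ h => exact h.compl
  | iUnion _ _ h => exact tMeasurable_laver_iUnion h

theorem mem_treeIdeal_iff_of_tMeasurable {𝕋 : Set (Set (List ℕ))}
    (hne : ∀ T ∈ 𝕋, (treeBody T).Nonempty) {A : Set (ℕ → ℕ)} (hA : TMeasurable 𝕋 A) :
    A ∈ treeIdeal 𝕋 ↔ ¬ ∃ T ∈ 𝕋, treeBody T ⊆ A := by
  constructor
  · rintro hA0 ⟨T, hT, hTA⟩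
    obtain ⟨Q, hQ, hQT, hQA⟩ := hA0 T hT
    obtain ⟨x, hx⟩ := hne Q hQ
    exact hQA.subset ⟨hx, hTA (treeBody_mono hQT hx)⟩
  · intro hno P hP
    obtain ⟨Q, hQ, hQP, hQA⟩ := hA P hP
    exact ⟨Q, hQ, hQP, hQA.resolve_left fun hQA => hno ⟨Q, hQ, hQA⟩⟩

/-- a Borel set belongs to l₀ iff it contains the body of no Laver tree. -/
theorem stmt8 (B : Set (ℕ → ℕ)) (hB : MeasurableSet[borel (ℕ → ℕ)] B) :
    B ∈ treeIdeal {T | IsLaverTree T} ↔ ¬ ∃ T, IsLaverTree T ∧ treeBody T ⊆ B :=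
  mem_treeIdeal_iff_of_tMeasurable
    (fun _ hT => (IsLaverTree.exists_isLaverStem hT).elim fun _ hs => hs.treeBody_nonempty)
    (tMeasurable_laver_of_measurableSet hB)
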